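/- Let P ∈ ℝ[x₁,…,xₙ] be a polynomial of degree d ≥ 1 and set f := 1 − xₙP² and ε_M := xₙP/(M(1+‖x‖²)^{d+1}). Then there exists M₀ > 0 such that for all M ≥ M₀ and all x ∈ ℝⁿ: |xₙ|·|∂f/∂xₙ(x)|·ε_M(x)² < 1/16, |xₙ·ε_M(x)| < 1/8, |ε_M(x)| < 1/2 and |∂ε_M/∂xₙ(x)| < 1/4. -/

import Mathlib

open MvPolynomial

/-!
Each of the four quantities is `Q(x) / (M (1 + ‖x‖²)^N)` or `Q(x) / (M² (1 + ‖x‖²)^N)` for a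
polynomial `Q` of degree at most `2N`: directly for `xₙP`, `xₙ·xₙP` and `xₙ·∂ₙf·(xₙP)²`, and by the
quotient rule for `∂ₙε_M`. Such a ratio `Q / (1 + ‖x‖²)^N` is bounded on all of `ℝⁿ`, because the
square of a monomial of degree `k` is at most `(1 + ‖x‖²)^k`. So every quantity is at most a
constant over `M` or `M²`, uniformly in `x`.
-/

namespace MvPolynomial

theorem totalDegree_pderiv_le {R σ : Type*} [CommSemiring R] (p : MvPolynomial σ R) (i : σ) :
    (pderiv i p).totalDegree ≤ p.totalDegree := by
  classical
  conv_lhs => rw [p.as_sum]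
  rw [map_sum]
  refine totalDegree_finsetSum_le fun u hu => ?_
  rw [pderiv_monomial]
  refine (totalDegree_monomial_le _ _).trans (le_trans ?_ (le_totalDegree hu))
  exact Finsupp.sum_le_sum_index tsub_le_self (fun _ _ _ _ h => h) (fun _ _ => rfl)

variable {σ : Type*} [Fintype σ]

theorem totalDegree_one_add_sum_X_sq_le :
    (1 + ∑ k, X k ^ 2 : MvPolynomial σ ℝ).totalDegree ≤ 2 := by
  refine (totalDegree_add _ _).trans (max_le (by simp) (totalDegree_finsetSum_le fun k _ => ?_))
  exact (totalDegree_X_pow k 2).le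

theorem sq_prod_pow_le_one_add_sum_sq_pow (x : σ → ℝ) (u : σ →₀ ℕ) :
    (∏ i ∈ u.support, x i ^ u i) ^ 2 ≤ (1 + ∑ k, x k ^ 2) ^ u.degree := by
  rw [← Finset.prod_pow, Finsupp.degree_apply, ← Finset.prod_pow_eq_pow_sum]
  refine Finset.prod_le_prod (fun i _ => by positivity) fun i _ => ?_
  rw [← pow_mul, mul_comm, pow_mul]
  have := Finset.single_le_sum (fun k _ => sq_nonneg (x k)) (Finset.mem_univ i)
  exact pow_le_pow_left₀ (sq_nonneg _) (by linarith) _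

theorem exists_abs_eval_le_mul_one_add_sum_sq_pow (p : MvPolynomial σ ℝ) {N : ℕ}
    (hp : p.totalDegree ≤ 2 * N) :
    ∃ C ≥ 0, ∀ x : σ → ℝ, |eval x p| ≤ C * (1 + ∑ k, x k ^ 2) ^ N := by
  refine ⟨∑ u ∈ p.support, |coeff u p|, by positivity, fun x => ?_⟩
  set s := 1 + ∑ k, x k ^ 2
  have hs : 1 ≤ s := le_add_of_nonneg_right (Finset.sum_nonneg fun k _ => sq_nonneg (x k))
  have hmonomial : ∀ u ∈ p.support, |∏ i ∈ u.support, x i ^ u i| ≤ s ^ N := fun u hu =>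
    abs_le_of_sq_le_sq (by
      rw [← pow_mul, mul_comm]
      exact (sq_prod_pow_le_one_add_sum_sq_pow x u).trans
        (pow_le_pow_right₀ hs ((le_totalDegree hu).trans hp))) (by positivity)
  calc |eval x p| = |∑ u ∈ p.support, coeff u p * ∏ i ∈ u.support, x i ^ u i| := by
        rw [eval_eq]
    _ ≤ ∑ u ∈ p.support, |coeff u p * ∏ i ∈ u.support, x i ^ u i| :=
        Finset.abs_sum_le_sum_abs _ _
    _ ≤ ∑ u ∈ p.support, |coeff u p| * s ^ N := Finset.sum_le_sum fun u hu => by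
        rw [abs_mul]; exact mul_le_mul_of_nonneg_left (hmonomial u hu) (abs_nonneg _)
    _ = (∑ u ∈ p.support, |coeff u p|) * s ^ N := (Finset.sum_mul ..).symm

theorem hasFDerivAt_eval (p : MvPolynomial σ ℝ) (x : σ → ℝ) :
    HasFDerivAt (fun y => eval y p)
      (∑ i, eval x (pderiv i p) • (ContinuousLinearMap.proj i : (σ → ℝ) →L[ℝ] ℝ)) x := by
  classical
  induction p using MvPolynomial.induction_on with
  | C a => simpa using hasFDerivAt_const a x
  | add p q hp hq =>
    simp only [map_add, add_smul, Finset.sum_add_distrib]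
    exact hp.fun_add hq
  | mul_X p i hp =>
    simp only [eval_mul, eval_X]
    refine (hp.fun_mul (hasFDerivAt_apply i x)).congr_fderiv ?_
    ext v
    simp [add_mul, Finset.sum_add_distrib, Finset.mul_sum, mul_assoc, Pi.single_apply,
      apply_ite (eval x), ite_mul]

variable [DecidableEq σ]

theorem fderiv_eval_apply_single (p : MvPolynomial σ ℝ) (x : σ → ℝ) (i : σ) :
    fderiv ℝ (fun y => eval y p) x (Pi.single i 1) = eval x (pderiv i p) := by
  simp [(hasFDerivAt_eval p x).fderiv, Pi.single_apply]

theorem fderiv_eval_div_eval_apply_single (p q : MvPolynomial σ ℝ) {x : σ → ℝ}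
    (hq : eval x q ≠ 0) (i : σ) :
    fderiv ℝ (fun y => eval y p / eval y q) x (Pi.single i 1) =
      eval x (pderiv i p * q - p * pderiv i q) / eval x q ^ 2 := by
  have h : HasFDerivAt (fun y => eval y p * (eval y q)⁻¹) _ x := (hasFDerivAt_eval p x).fun_mul
    ((hasDerivAt_inv hq).comp_hasFDerivAt x (hasFDerivAt_eval q x))
  simp only [div_eq_mul_inv]
  rw [h.fderiv]
  simp [Pi.single_apply]
  field_simp
  ring

theorem fderiv_eval_div_mul_one_add_sum_sq_pow_apply_single (p : MvPolynomial σ ℝ) (N : ℕ)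
    {M : ℝ} (hM : M ≠ 0) (x : σ → ℝ) (i : σ) :
    fderiv ℝ (fun y => eval y p / (M * (1 + ∑ k, y k ^ 2) ^ N)) x (Pi.single i 1) =
      eval x (pderiv i p * (1 + ∑ k, X k ^ 2) ^ N - p * pderiv i ((1 + ∑ k, X k ^ 2) ^ N)) /
        (M * (1 + ∑ k, x k ^ 2) ^ (2 * N)) := by
  have hT : ∀ y : σ → ℝ, eval y (1 + ∑ k, X k ^ 2) = 1 + ∑ k, y k ^ 2 := by simp
  have hden : eval x (C M * (1 + ∑ k, X k ^ 2) ^ N) ≠ 0 := by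
    simp only [eval_mul, eval_C, eval_pow, hT]
    positivity
  have key := fderiv_eval_div_eval_apply_single p _ hden i
  simp only [eval_mul, eval_C, eval_pow, hT] at key
  rw [key, pderiv_C_mul]
  simp only [eval_sub, eval_mul, eval_C, eval_pow, hT]
  field_simp
  ring

end MvPolynomial

theorem abs_div_mul_le_div {a C D M : ℝ} (ha : |a| ≤ C * D) (hD : 0 < D) (hM : 0 < M) :
    |a / (M * D)| ≤ C / M := by
  rw [abs_div, abs_of_pos (mul_pos hM hD), div_le_div_iff₀ (mul_pos hM hD) hM]
  nlinarith [abs_nonneg a]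

/-- `ε_M`, with `xᵢ` in the role of `xₙ` and `N` in the role of `d + 1`. -/
noncomputable def perturbation {σ : Type*} [Fintype σ] (P : MvPolynomial σ ℝ) (i : σ) (N : ℕ)
    (M : ℝ) (x : σ → ℝ) : ℝ :=
  x i * eval x P / (M * (1 + ∑ k, x k ^ 2) ^ N)

section perturbation

variable {σ : Type*} [Fintype σ] (P : MvPolynomial σ ℝ) (i : σ) {N : ℕ}

theorem exists_abs_perturbation_le (hN : P.totalDegree + 1 ≤ N) :
    ∃ C ≥ 0, ∀ M > 0, ∀ x, |perturbation P i N M x| ≤ C / M := by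
  obtain ⟨C, hC, h⟩ := exists_abs_eval_le_mul_one_add_sum_sq_pow (X i * P) (N := N) (by
    grw [totalDegree_mul, totalDegree_X]; omega)
  refine ⟨C, hC, fun M hM x => ?_⟩
  rw [perturbation, ← eval_X (f := x) i, ← eval_mul]
  exact abs_div_mul_le_div (h x) (by positivity) hM

theorem exists_abs_mul_perturbation_le (hN : P.totalDegree + 1 ≤ N) :
    ∃ C ≥ 0, ∀ M > 0, ∀ x, |x i * perturbation P i N M x| ≤ C / M := by
  obtain ⟨C, hC, h⟩ := exists_abs_eval_le_mul_one_add_sum_sq_pow (X i * (X i * P)) (N := N) (by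
    grw [totalDegree_mul, totalDegree_X, totalDegree_mul, totalDegree_X]; omega)
  refine ⟨C, hC, fun M hM x => ?_⟩
  rw [perturbation, ← mul_div_assoc, ← eval_X (f := x) i, ← eval_mul, ← eval_mul]
  exact abs_div_mul_le_div (h x) (by positivity) hM

variable [DecidableEq σ]

theorem exists_abs_mul_abs_fderiv_mul_perturbation_sq_le (hN : P.totalDegree + 1 ≤ N) :
    ∃ C ≥ 0, ∀ M > 0, ∀ x,
      |x i| * |fderiv ℝ (fun y => 1 - y i * eval y P ^ 2) x (Pi.single i 1)| *
        perturbation P i N M x ^ 2 ≤ C / M ^ 2 := by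
  set F : MvPolynomial σ ℝ := 1 - X i * P ^ 2
  obtain ⟨C, hC, h⟩ := exists_abs_eval_le_mul_one_add_sum_sq_pow
    (X i * pderiv i F * (X i * P) ^ 2) (N := 2 * N) (by
      grw [totalDegree_mul, totalDegree_mul, totalDegree_X, totalDegree_pderiv_le,
        totalDegree_sub, totalDegree_one, totalDegree_pow, totalDegree_mul, totalDegree_X,
        totalDegree_pow, totalDegree_mul, totalDegree_X]
      omega)
  refine ⟨C, hC, fun M hM x => ?_⟩
  have hF : (fun y : σ → ℝ => 1 - y i * eval y P ^ 2) = fun y => eval y F := by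
    funext y; simp [F]
  have hs : 0 < 1 + ∑ k, x k ^ 2 := by positivity
  refine le_of_eq_of_le ?_ (abs_div_mul_le_div (h x) (pow_pos hs _) (pow_pos hM 2))
  rw [hF, fderiv_eval_apply_single, perturbation, abs_div,
    abs_of_pos (mul_pos (pow_pos hM 2) (pow_pos hs _))]
  simp only [eval_mul, eval_pow, eval_X, abs_mul, abs_sq]
  rw [div_pow, mul_pow M, ← pow_mul, mul_comm N, mul_div_assoc]

theorem exists_abs_fderiv_perturbation_le (hN : P.totalDegree + 1 ≤ N) :
    ∃ C ≥ 0, ∀ M > 0, ∀ x, |fderiv ℝ (perturbation P i N M) x (Pi.single i 1)| ≤ C / M := by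
  set T : MvPolynomial σ ℝ := 1 + ∑ k, X k ^ 2
  obtain ⟨C, hC, h⟩ := exists_abs_eval_le_mul_one_add_sum_sq_pow
    (pderiv i (X i * P) * T ^ N - X i * P * pderiv i (T ^ N)) (N := 2 * N) (by
      grw [totalDegree_sub, totalDegree_mul, totalDegree_mul, totalDegree_pderiv_le,
        totalDegree_pderiv_le, totalDegree_pow, totalDegree_mul, totalDegree_X,
        totalDegree_one_add_sum_X_sq_le]
      omega)
  refine ⟨C, hC, fun M hM x => ?_⟩
  have hR : ∀ y : σ → ℝ, y i * eval y P = eval y (X i * P) := by simp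
  unfold perturbation
  simp only [hR]
  rw [fderiv_eval_div_mul_one_add_sum_sq_pow_apply_single _ _ hM.ne']
  exact abs_div_mul_le_div (h x) (by positivity) hM

end perturbation

theorem stmt_12_general (n : ℕ) (P : MvPolynomial (Fin (n + 1)) ℝ) :
    ∃ M₀ > (0 : ℝ), ∀ M : ℝ, M₀ ≤ M → ∀ x : Fin (n + 1) → ℝ,
      (|x (Fin.last n)| *
          |fderiv ℝ (fun y : Fin (n + 1) → ℝ => 1 - y (Fin.last n) * (eval y P) ^ 2)
            x (Pi.single (Fin.last n) 1)| *
          (x (Fin.last n) * eval x P /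
            (M * (1 + ∑ k, x k ^ 2) ^ (P.totalDegree + 1))) ^ 2 < 1 / 16) ∧
      (|x (Fin.last n) *
          (x (Fin.last n) * eval x P /
            (M * (1 + ∑ k, x k ^ 2) ^ (P.totalDegree + 1)))| < 1 / 8) ∧
      (|x (Fin.last n) * eval x P /
          (M * (1 + ∑ k, x k ^ 2) ^ (P.totalDegree + 1))| < 1 / 2) ∧
      (|fderiv ℝ
          (fun y : Fin (n + 1) → ℝ =>
            y (Fin.last n) * eval y P /
              (M * (1 + ∑ k, y k ^ 2) ^ (P.totalDegree + 1)))
          x (Pi.single (Fin.last n) 1)| < 1 / 4) := by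
  obtain ⟨C₁, hC₁, h₁⟩ := exists_abs_mul_abs_fderiv_mul_perturbation_sq_le P (Fin.last n) le_rfl
  obtain ⟨C₂, hC₂, h₂⟩ := exists_abs_mul_perturbation_le P (Fin.last n) le_rfl
  obtain ⟨C₃, hC₃, h₃⟩ := exists_abs_perturbation_le P (Fin.last n) le_rfl
  obtain ⟨C₄, hC₄, h₄⟩ := exists_abs_fderiv_perturbation_le P (Fin.last n) le_rfl
  refine ⟨16 * (C₁ + C₂ + C₃ + C₄) + 1, by positivity, fun M hM₀ x => ?_⟩
  have hM : 0 < M := by linarith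
  refine ⟨(h₁ M hM x).trans_lt ?_, (h₂ M hM x).trans_lt ?_, (h₃ M hM x).trans_lt ?_,
    (h₄ M hM x).trans_lt ?_⟩ <;> rw [div_lt_iff₀ (by positivity)] <;> nlinarith

/-- For f := 1 − xₙP² and ε_M := xₙP/(M(1+‖x‖²)^{d+1}) with d = deg P ≥ 1, there
is M₀ > 0 such that for all M ≥ M₀ the four stated inequalities hold on all of ℝⁿ. -/
theorem stmt_12 (n : ℕ) (P : MvPolynomial (Fin (n + 1)) ℝ)
    (hd : 1 ≤ P.totalDegree) :
    ∃ M₀ > (0 : ℝ), ∀ M : ℝ, M₀ ≤ M → ∀ x : Fin (n + 1) → ℝ,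
      (|x (Fin.last n)| *
          |fderiv ℝ (fun y : Fin (n + 1) → ℝ => 1 - y (Fin.last n) * (eval y P) ^ 2)
            x (Pi.single (Fin.last n) 1)| *
          (x (Fin.last n) * eval x P /
            (M * (1 + ∑ k, x k ^ 2) ^ (P.totalDegree + 1))) ^ 2 < 1 / 16) ∧
      (|x (Fin.last n) *
          (x (Fin.last n) * eval x P /
            (M * (1 + ∑ k, x k ^ 2) ^ (P.totalDegree + 1)))| < 1 / 8) ∧
      (|x (Fin.last n) * eval x P /
          (M * (1 + ∑ k, x k ^ 2) ^ (P.totalDegree + 1))| < 1 / 2) ∧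
      (|fderiv ℝ
          (fun y : Fin (n + 1) → ℝ =>
            y (Fin.last n) * eval y P /
              (M * (1 + ∑ k, y k ^ 2) ^ (P.totalDegree + 1)))
          x (Pi.single (Fin.last n) 1)| < 1 / 4) :=
  stmt_12_general n P
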